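/- Let c ∈ 𝒪 be nonzero and coprime to 3, and let m, w, b ∈ 𝒪 with mwb coprime to c. Then (w/c)₃ · ∑_{y (c)*} (y/c)₃ e(y/c) · ∑_{x (c)*} e( x⁻¹·( b·w⁻¹ − m³·(3³·w²·y)⁻¹ ) / c ) = (w/c)₃ · ∑_{q | c} μ(c/q)·N(q) · ∑_{y (c)*, 3³·b·w·y ≡ m³ (mod q)} (y/c)₃ e(y/c), where q runs over one representative of each ideal divisor of (c). -/

import Mathlib

/-!
For fixed `u`, the inner sum over `v` is, after `v ↦ v⁻¹`, the Ramanujan sum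
`∑_{v ∈ (𝒪/c)ˣ} e(vA/c)` with `A = b w⁻¹ − m³ (3³ w² u)⁻¹`. Since `3³ w² u` is a unit modulo `c`
and `3³ w² u · A ≡ 3³ b w u − m³ (mod c)`, a divisor `q` of `c` divides `A` iff it divides
`3³ b w u − m³`. The Ramanujan sum equals `∑_{q ∣ c} μ(c/q) N(q) [q ∣ A]`: detect the units of
`𝒪/(c)` by Möbius inversion over the ideals containing `(x) + (c)`, and sum the additive
character `x ↦ e(xA/c)` over each ideal `(q)/(c)`, which gives `N(c/q)` or `0` according as
`c/q ∣ A` or not, because `𝒪` is its own dual for the pairing `Tr(xy/δ)`. Exchanging the sums over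
`u` and `q` gives the identity; the cubic residue symbols are carried along untouched. That
`ℤ[ω]` is norm-Euclidean, hence a PID, lets every divisor of `(c)` be written as `(q)`.
-/

noncomputable section

namespace CubicSeries

open scoped Classical

def ω : ℂ := Complex.exp (2 * Real.pi * Complex.I / 3)

def O : Subring ℂ := Subring.closure {ω}

abbrev OK : Type _ := O

def δ : ℂ := ω - ω ^ 2

def eC (z : ℂ) : ℂ :=
  Complex.exp (2 * Real.pi * Complex.I * (z / δ + (starRingEnd ℂ) (z / δ)))

def rep {I : Ideal OK} (x : OK ⧸ I) : OK :=
  Function.surjInv Ideal.Quotient.mk_surjective x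

/-- `N(c) = |𝒪/(c)|`, the absolute norm. -/
def Nm (c : OK) : ℕ := Nat.card (OK ⧸ Ideal.span {c})

/-- `φ(c) = |(𝒪/(c))ˣ|`. -/
def totient (c : OK) : ℕ := Nat.card ((OK ⧸ Ideal.span {c})ˣ)

/-- a multiplicative inverse modulo `c` (an arbitrary element when `x` is not invertible). -/
def invMod (c x : OK) : OK :=
  rep (Ring.inverse (Ideal.Quotient.mk (Ideal.span {c}) x))

def T (A B c : OK) : ℂ :=
  ∑ᶠ x : OK ⧸ Ideal.span {c}, eC (((A * rep x ^ 3 + B * rep x : OK) : ℂ) / (c : ℂ))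

/-- The cubic residue symbol `(x/π)₃` for a prime element `π` not dividing `3`:
the unique cube root of unity congruent to `x^{(N(π)-1)/3}` mod `π`, and `0` if `π ∣ x`. -/
def cubicCharP (π x : OK) : OK :=
  if h : ∃ ζ : OK, ζ ^ 3 = 1 ∧ π ∣ ζ - x ^ ((Nm π - 1) / 3) ∧ ¬ π ∣ x then h.choose else 0

/-- The cubic residue symbol `(x/c)₃` for `c` coprime to `3`, defined via a factorization of
`c` into a unit times prime elements (with multiplicity). -/
def cubicChar (c x : OK) : OK :=
  if h : ∃ fs : OKˣ × Multiset OK, (∀ π ∈ fs.2, Prime π) ∧ c = (fs.1 : OK) * fs.2.prod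
  then (h.choose.2.map fun π => cubicCharP π x).prod
  else 0

/-- The cubic Gauss sum `g(a,c) = ∑_{x (c)*} (x/c)₃ e(ax/c)`. -/
def gaussSum (a c : OK) : ℂ :=
  ∑ᶠ u : (OK ⧸ Ideal.span {c})ˣ,
    ((cubicChar c (rep u.val) : OK) : ℂ) * eC (((a * rep u.val : OK) : ℂ) / (c : ℂ))

/-- The Möbius function: `μ(c) = (−1)^r` if `(c)` is a product of `r` distinct prime ideals,
and `μ(c) = 0` otherwise. -/
def moebius (c : OK) : ℤ :=
  if h : ∃ s : Finset (Ideal OK), (∀ P ∈ s, Prime P) ∧ Ideal.span {c} = ∏ P ∈ s, P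
  then (-1) ^ h.choose.card
  else 0

/-- `p^n` modulo `c`, where a negative exponent means the inverse of `p^{-n}` mod `c`. -/
def ppow (c p : OK) (n : ℤ) : OK :=
  if 0 ≤ n then p ^ n.toNat else invMod c (p ^ (-n).toNat)

/-- A choice of generator of a (principal) ideal. -/
def gen (J : Ideal OK) : OK := if h : ∃ q : OK, Ideal.span {q} = J then h.choose else 0

/-- A choice of cofactor: `cofactor c q` is a `d` with `c = q·d`, when one exists. -/
def cofactor (c q : OK) : OK := if h : ∃ d : OK, c = q * d then h.choose else 0

/-! ### The ring `ℤ[ω]` -/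

lemma isPrimitiveRoot_omega : IsPrimitiveRoot ω 3 := by
  simpa [ω] using Complex.isPrimitiveRoot_exp 3 (by norm_num)

lemma omega_pow_three : ω ^ 3 = 1 := isPrimitiveRoot_omega.pow_eq_one

lemma omega_sq_add_omega_add_one : ω ^ 2 + ω + 1 = 0 := by
  have h := isPrimitiveRoot_omega.geom_sum_eq_zero (by norm_num)
  simp only [Finset.sum_range_succ, Finset.sum_range_zero] at h
  linear_combination h

lemma conj_omega : (starRingEnd ℂ) ω = ω ^ 2 := by
  have hnorm : Complex.normSq ω = 1 := by
    rw [← Complex.sq_norm, isPrimitiveRoot_omega.norm'_eq_one (by norm_num), one_pow]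
  have h : ω * (starRingEnd ℂ) ω = ω * ω ^ 2 := by
    rw [Complex.mul_conj, hnorm]; push_cast; linear_combination -omega_pow_three
  exact mul_left_cancel₀ (isPrimitiveRoot_omega.ne_zero (by norm_num)) h

lemma delta_ne_zero : δ ≠ 0 := by
  intro h
  have : ω * (1 - ω) = 0 := by rw [δ] at h; linear_combination h
  rcases mul_eq_zero.mp this with h0 | h1
  · exact isPrimitiveRoot_omega.ne_zero (by norm_num) h0
  · exact isPrimitiveRoot_omega.ne_one (by norm_num) (by linear_combination -h1)

lemma conj_delta : (starRingEnd ℂ) δ = -δ := by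
  rw [δ, map_sub, map_pow, conj_omega]
  linear_combination -ω * omega_pow_three

lemma normSq_add_mul_omega (u v : ℝ) : Complex.normSq (u + v * ω) = u ^ 2 - u * v + v ^ 2 := by
  apply Complex.ofReal_injective
  rw [← Complex.mul_conj, map_add, map_mul, conj_omega, Complex.conj_ofReal, Complex.conj_ofReal]
  push_cast
  linear_combination (u : ℂ) * v * omega_sq_add_omega_add_one + (v : ℂ) ^ 2 * omega_pow_three

lemma omega_im_ne_zero : ω.im ≠ 0 := by
  intro h
  have hreal : (starRingEnd ℂ) ω = ω := Complex.conj_eq_iff_im.mpr h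
  rw [conj_omega] at hreal
  have : ω * (ω - 1) = 0 := by linear_combination hreal
  rcases mul_eq_zero.mp this with h0 | h1
  · exact isPrimitiveRoot_omega.ne_zero (by norm_num) h0
  · exact isPrimitiveRoot_omega.ne_one (by norm_num) (sub_eq_zero.mp h1)

lemma exists_real_eq_add_mul_omega (z : ℂ) : ∃ x y : ℝ, z = x + y * ω := by
  refine ⟨z.re - z.im / ω.im * ω.re, z.im / ω.im, Complex.ext ?_ ?_⟩
  · simp
  · simp [omega_im_ne_zero]

lemma exists_int_eq_add_mul_omega {z : ℂ} (hz : z ∈ O) : ∃ a b : ℤ, z = a + b * ω := by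
  induction hz using Subring.closure_induction with
  | mem x hx => exact ⟨0, 1, by rw [Set.mem_singleton_iff.mp hx]; push_cast; ring⟩
  | one => exact ⟨1, 0, by push_cast; ring⟩
  | zero => exact ⟨0, 0, by push_cast; ring⟩
  | add x y _ _ hx hy =>
    obtain ⟨a, b, rfl⟩ := hx
    obtain ⟨a', b', rfl⟩ := hy
    exact ⟨a + a', b + b', by push_cast; ring⟩
  | neg x _ hx =>
    obtain ⟨a, b, rfl⟩ := hx
    exact ⟨-a, -b, by push_cast; ring⟩
  | mul x y _ _ hx hy =>
    obtain ⟨a, b, rfl⟩ := hx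
    obtain ⟨a', b', rfl⟩ := hy
    exact ⟨a * a' - b * b', a * b' + a' * b - b * b', by
      push_cast; linear_combination (b : ℂ) * b' * omega_sq_add_omega_add_one⟩

def ωO : OK := ⟨ω, Subring.subset_closure rfl⟩

@[simp] lemma coe_ωO : ((ωO : OK) : ℂ) = ω := rfl

lemma OK.exists_int_eq (o : OK) : ∃ a b : ℤ, o = a + b * ωO := by
  obtain ⟨a, b, h⟩ := exists_int_eq_add_mul_omega o.2
  exact ⟨a, b, Subtype.ext (by simpa using h)⟩

lemma normSq_intCast_add_mul_ωO (a b : ℤ) :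
    Complex.normSq (((a + b * ωO : OK)) : ℂ) = ((a ^ 2 - a * b + b ^ 2 : ℤ) : ℝ) := by
  exact_mod_cast normSq_add_mul_omega a b

lemma exists_pos_int_dvd {c : OK} (hc : c ≠ 0) : ∃ n : ℤ, 0 < n ∧ c ∣ (n : OK) := by
  obtain ⟨a, b, rfl⟩ := c.exists_int_eq
  -- the norm `c · c̄`, where `c̄ = (a - b) - b ω`
  refine ⟨a ^ 2 - a * b + b ^ 2, ?_, (a - b : ℤ) - b * ωO, ?_⟩
  · rcases eq_or_ne b 0 with rfl | hb
    · have ha : a ≠ 0 := by rintro rfl; simp at hc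
      nlinarith [sq_pos_of_ne_zero ha]
    · nlinarith [sq_nonneg (2 * a - b), sq_pos_of_ne_zero hb]
  · apply Subtype.ext
    push_cast
    rw [coe_ωO]
    linear_combination (b : ℂ) ^ 2 * omega_sq_add_omega_add_one

lemma finite_quotient_span {c : OK} (hc : c ≠ 0) : Finite (OK ⧸ Ideal.span {c}) := by
  obtain ⟨n, hn, hcn⟩ := exists_pos_int_dvd hc
  let f : ℤ × ℤ → OK ⧸ Ideal.span {c} := fun p => Ideal.Quotient.mk _ (p.1 + p.2 * ωO)
  refine Set.finite_univ_iff.mp <|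
    (((Set.finite_Ico 0 n).prod (Set.finite_Ico 0 n)).image f).subset fun x _ => ?_
  obtain ⟨o, rfl⟩ := Ideal.Quotient.mk_surjective x
  obtain ⟨a, b, rfl⟩ := o.exists_int_eq
  refine ⟨(a % n, b % n), ⟨⟨Int.emod_nonneg _ hn.ne', Int.emod_lt_of_pos _ hn⟩,
    ⟨Int.emod_nonneg _ hn.ne', Int.emod_lt_of_pos _ hn⟩⟩, ?_⟩
  rw [Ideal.Quotient.eq, Ideal.mem_span_singleton]
  refine hcn.trans ⟨-((a / n : ℤ) : OK) - ((b / n : ℤ) : OK) * ωO, ?_⟩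
  have ha : ((a % n : ℤ) : OK) + n * (a / n : ℤ) = a := by exact_mod_cast Int.emod_add_mul_ediv a n
  have hb : ((b % n : ℤ) : OK) + n * (b / n : ℤ) = b := by exact_mod_cast Int.emod_add_mul_ediv b n
  linear_combination ha + ωO * hb

lemma exists_normSq_sub_lt_one (z : ℂ) : ∃ q : OK, Complex.normSq (z - q) < 1 := by
  obtain ⟨x, y, rfl⟩ := exists_real_eq_add_mul_omega z
  refine ⟨round x + round y * ωO, ?_⟩
  have hsub : (x + y * ω : ℂ) - ((round x + round y * ωO : OK) : ℂ)
      = ((x - round x : ℝ) : ℂ) + ((y - round y : ℝ) : ℂ) * ω := by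
    push_cast [coe_ωO]; ring
  rw [hsub, normSq_add_mul_omega]
  have hx := abs_le.mp (abs_sub_round x)
  have hy := abs_le.mp (abs_sub_round y)
  nlinarith

lemma exists_normSq_eq_natCast (o : OK) : ∃ k : ℕ, Complex.normSq o = k := by
  obtain ⟨a, b, rfl⟩ := o.exists_int_eq
  refine ⟨(a ^ 2 - a * b + b ^ 2).toNat, ?_⟩
  rw [normSq_intCast_add_mul_ωO, ← Int.cast_natCast, Int.toNat_of_nonneg (by nlinarith [sq_nonneg (2 * a - b)])]

/-- `𝒪` is norm-Euclidean: an element of minimal norm in `I` generates `I`. -/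
instance : IsPrincipalIdealRing OK where
  principal I := by
    by_cases hI : I = ⊥
    · exact hI ▸ bot_isPrincipal
    have hex : ∃ k : ℕ, ∃ b ∈ I, b ≠ 0 ∧ Complex.normSq b = k := by
      obtain ⟨b, hbI, hb0⟩ := Submodule.exists_mem_ne_zero_of_ne_bot hI
      obtain ⟨k, hk⟩ := exists_normSq_eq_natCast b
      exact ⟨k, b, hbI, hb0, hk⟩
    obtain ⟨b, hbI, hb0, hbk⟩ := Nat.find_spec hex
    refine ⟨b, le_antisymm (fun a haI => ?_) ((Ideal.span_singleton_le_iff_mem I).mpr hbI)⟩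
    have hbC : (b : ℂ) ≠ 0 := by exact_mod_cast hb0
    obtain ⟨q, hq⟩ := exists_normSq_sub_lt_one (a / b)
    have hr : a - q * b = 0 := by
      by_contra hr
      obtain ⟨k, hk⟩ := exists_normSq_eq_natCast (a - q * b)
      have hlt : Complex.normSq ((a - q * b : OK) : ℂ) < Complex.normSq (b : ℂ) := by
        have : ((a - q * b : OK) : ℂ) = (a / b - q) * b := by push_cast; field_simp
        rw [this, Complex.normSq_mul]
        exact mul_lt_of_lt_one_left (Complex.normSq_pos.mpr hbC) hq
      rw [hk, hbk, Nat.cast_lt] at hlt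
      exact Nat.find_min hex hlt ⟨a - q * b, I.sub_mem haI (I.mul_mem_left q hbI), hr, hk⟩
    exact Ideal.mem_span_singleton'.mpr ⟨q, (sub_eq_zero.mp hr).symm⟩

instance : IsDedekindDomain OK := IsPrincipalIdealRing.isDedekindDomain OK

/-! ### Möbius function on the ideals of a Dedekind domain -/

section IdealMoebius

variable {R : Type*} [CommRing R]

def idealDivisors (I : Ideal R) : Finset (Ideal R) :=
  if h : {J : Ideal R | J ∣ I}.Finite then h.toFinset else ∅

def idealMoebius (J : Ideal R) : ℤ :=
  if h : ∃ s : Finset (Ideal R), (∀ P ∈ s, Prime P) ∧ J = ∏ P ∈ s, P then (-1) ^ h.choose.card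
  else 0

variable [IsDedekindDomain R]

lemma finite_setOf_dvd {I : Ideal R} (hI : I ≠ ⊥) : {J : Ideal R | J ∣ I}.Finite :=
  have := UniqueFactorizationMonoid.fintypeSubtypeDvd I hI
  Set.finite_coe_iff.mp (Finite.of_fintype {J : Ideal R // J ∣ I})

lemma mem_idealDivisors {I J : Ideal R} (hI : I ≠ ⊥) : J ∈ idealDivisors I ↔ J ∣ I := by
  rw [idealDivisors, dif_pos (finite_setOf_dvd hI), Set.Finite.mem_toFinset]
  rfl

lemma finset_eq_of_prod_eq_prod {M : Type*} [CommMonoidWithZero M]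
    [UniqueFactorizationMonoid M] [Subsingleton Mˣ] {s t : Finset M} (hs : ∀ p ∈ s, Prime p)
    (ht : ∀ p ∈ t, Prime p) (h : ∏ p ∈ s, p = ∏ p ∈ t, p) : s = t := by
  have hrel := UniqueFactorizationMonoid.factors_unique (f := s.val) (g := t.val)
    (fun p hp => (hs p hp).irreducible) (fun p hp => (ht p hp).irreducible)
    (associated_iff_eq.mpr (by
      rwa [Finset.prod_eq_multiset_prod, Finset.prod_eq_multiset_prod, Multiset.map_id',
        Multiset.map_id'] at h))
  exact Finset.val_injective <| Multiset.rel_eq.mp <|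
    hrel.mono fun _ _ _ _ hab => associated_iff_eq.mp hab

lemma idealMoebius_prod {s : Finset (Ideal R)} (hs : ∀ P ∈ s, Prime P) :
    idealMoebius (∏ P ∈ s, P) = (-1) ^ s.card := by
  have h : ∃ t : Finset (Ideal R), (∀ P ∈ t, Prime P) ∧ ∏ P ∈ s, P = ∏ P ∈ t, P := ⟨s, hs, rfl⟩
  rw [idealMoebius, dif_pos h, ← finset_eq_of_prod_eq_prod hs h.choose_spec.1 h.choose_spec.2]

lemma eq_top_iff_forall_not_prime_dvd {I : Ideal R} (hI : I ≠ ⊥) :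
    I = ⊤ ↔ ∀ P : Ideal R, P ∣ I → ¬Prime P := by
  refine ⟨fun h P hP hPp => hPp.not_isUnit (isUnit_of_dvd_unit hP (h ▸ Ideal.isUnit_iff.mpr rfl)),
    fun h => ?_⟩
  by_contra hne
  obtain ⟨P, hPirr, hPI⟩ := WfDvdMonoid.exists_irreducible_factor
    (mt Ideal.isUnit_iff.mp hne) (by simpa using hI)
  exact h P hPI hPirr.prime

/-- Squarefree divisors of `I` are the products of sets of prime divisors of `I`. -/
theorem sum_idealMoebius_idealDivisors {I : Ideal R} (hI : I ≠ ⊥) :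
    ∑ J ∈ idealDivisors I, idealMoebius J = if I = ⊤ then 1 else 0 := by
  set P := (idealDivisors I).filter Prime with hPdef
  have hP : ∀ {T}, T ∈ P.powerset → ∀ Q ∈ T, Prime Q := fun hT Q hQ =>
    (Finset.mem_filter.mp (Finset.mem_powerset.mp hT hQ)).2
  have hsub : P.powerset.image (∏ Q ∈ ·, Q) ⊆ idealDivisors I := by
    simp only [Finset.subset_iff, Finset.mem_image, forall_exists_index, and_imp]
    rintro _ T hT rfl
    refine (mem_idealDivisors hI).mpr (Finset.prod_primes_dvd I (hP hT) fun Q hQ => ?_)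
    exact (mem_idealDivisors hI).mp (Finset.mem_filter.mp (Finset.mem_powerset.mp hT hQ)).1
  have hzero : ∀ J ∈ idealDivisors I, J ∉ P.powerset.image (∏ Q ∈ ·, Q) → idealMoebius J = 0 := by
    intro J hJ hJP
    apply dif_neg
    rintro ⟨T, hT, hJT⟩
    apply hJP
    rw [Finset.mem_image]
    refine ⟨T, Finset.mem_powerset.mpr fun Q hQ => ?_, hJT.symm⟩
    rw [hPdef, Finset.mem_filter, mem_idealDivisors hI]
    rw [mem_idealDivisors hI, hJT] at hJ
    have hQJ : Q ∣ ∏ P ∈ T, P := Finset.dvd_prod_of_mem (fun P => P) hQ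
    exact ⟨hQJ.trans hJ, hT Q hQ⟩
  rw [← Finset.sum_subset hsub hzero, Finset.sum_image fun T hT T' hT' h =>
    finset_eq_of_prod_eq_prod (hP hT) (hP hT') h]
  rw [Finset.sum_congr rfl fun T hT => idealMoebius_prod (hP hT),
    Finset.sum_powerset_neg_one_pow_card]
  congr 1
  rw [eq_top_iff_forall_not_prime_dvd hI, hPdef, Finset.filter_eq_empty_iff]
  simp only [mem_idealDivisors hI]

theorem sum_idealMoebius_idealDivisors_mem {I : Ideal R} (hI : I ≠ ⊥) (x : R) :
    ∑ J ∈ idealDivisors I with x ∈ J, idealMoebius J =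
      if IsCoprime (Ideal.span {x}) I then 1 else 0 := by
  have hsup : Ideal.span {x} ⊔ I ≠ ⊥ := fun h => hI (le_bot_iff.mp (h ▸ le_sup_right))
  have hdiv : (idealDivisors I).filter (x ∈ ·) = idealDivisors (Ideal.span {x} ⊔ I) := by
    ext J
    rw [Finset.mem_filter, mem_idealDivisors hI, mem_idealDivisors hsup, Ideal.dvd_iff_le,
      Ideal.dvd_iff_le, sup_le_iff, Ideal.span_singleton_le_iff_mem, and_comm]
  rw [hdiv, sum_idealMoebius_idealDivisors hsup]
  congr 1
  exact propext Ideal.isCoprime_iff_sup_eq.symm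

lemma finsum_mem_setOf_dvd_eq_sum {M : Type*} [AddCommMonoid M] {I : Ideal R} (hI : I ≠ ⊥)
    (f : Ideal R → M) : ∑ᶠ J ∈ {J : Ideal R | J ∣ I}, f J = ∑ J ∈ idealDivisors I, f J := by
  rw [finsum_mem_eq_finite_toFinset_sum f (finite_setOf_dvd hI), idealDivisors,
    dif_pos (finite_setOf_dvd hI)]

end IdealMoebius

/-! ### Additive characters of `𝒪/(c)` -/

lemma eC_add (z z' : ℂ) : eC (z + z') = eC z * eC z' := by
  rw [eC, eC, eC, ← Complex.exp_add, add_div, map_add]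
  ring_nf

lemma eC_coe (o : OK) : eC o = 1 := by
  obtain ⟨a, b, rfl⟩ := o.exists_int_eq
  have harg : ((a + b * ωO : OK) : ℂ) / δ + (starRingEnd ℂ) (((a + b * ωO : OK) : ℂ) / δ) = b := by
    push_cast
    rw [coe_ωO, map_div₀, conj_delta, map_add, map_mul, conj_omega, map_intCast, map_intCast]
    field_simp [delta_ne_zero]
    rw [δ]
    ring
  rw [eC, harg, mul_comm]
  exact Complex.exp_int_mul_two_pi_mul_I b

lemma eC_add_coe (z : ℂ) (o : OK) : eC (z + o) = eC z := by
  rw [eC_add, eC_coe, mul_one]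

lemma exists_int_of_eC_eq_one {z : ℂ} (h : eC z = 1) :
    ∃ n : ℤ, z / δ + (starRingEnd ℂ) (z / δ) = n := by
  obtain ⟨n, hn⟩ := Complex.exp_eq_one_iff.mp h
  refine ⟨n, mul_left_cancel₀ (?_ : (2 * Real.pi * Complex.I : ℂ) ≠ 0) (by linear_combination hn)⟩
  simp [Real.pi_ne_zero]

/-- `𝒪` is its own dual for the pairing `(x, y) ↦ Tr(xy/δ)`: `e(z) = e(ωz) = 1` forces `z ∈ 𝒪`. -/
lemma exists_OK_of_eC_eq_one {z : ℂ} (h1 : eC z = 1) (h2 : eC (ω * z) = 1) :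
    ∃ o : OK, z = o := by
  obtain ⟨n₁, hn₁⟩ := exists_int_of_eC_eq_one h1
  obtain ⟨n₂, hn₂⟩ := exists_int_of_eC_eq_one h2
  simp only [map_div₀, map_mul, conj_omega, conj_delta] at hn₁ hn₂
  refine ⟨(n₁ + n₂ : ℤ) + n₁ * ωO, ?_⟩
  push_cast
  rw [coe_ωO]
  field_simp [delta_ne_zero] at hn₁ hn₂
  refine mul_left_cancel₀ delta_ne_zero ?_
  rw [δ] at hn₁ hn₂ ⊢
  linear_combination hn₂ - ω ^ 2 * hn₁ - (ω - ω ^ 2) * n₁ * omega_sq_add_omega_add_one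

lemma isUnit_mk_span_singleton_iff {R : Type*} [CommRing R] {c x : R} :
    IsUnit (Ideal.Quotient.mk (Ideal.span {c}) x) ↔ IsCoprime x c := by
  rw [isUnit_iff_exists_inv]
  constructor
  · rintro ⟨y, hy⟩
    obtain ⟨y, rfl⟩ := Ideal.Quotient.mk_surjective y
    rw [← map_mul, ← map_one (Ideal.Quotient.mk _), Ideal.Quotient.eq,
      Ideal.mem_span_singleton'] at hy
    obtain ⟨t, ht⟩ := hy
    exact ⟨y, -t, by linear_combination -ht⟩
  · rintro ⟨a, b, h⟩
    refine ⟨Ideal.Quotient.mk _ a, ?_⟩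
    rw [← map_mul, ← map_one (Ideal.Quotient.mk _), Ideal.Quotient.eq,
      Ideal.mem_span_singleton']
    exact ⟨-b, by linear_combination -h⟩

lemma dvd_iff_dvd_of_isCoprime {R : Type*} [CommRing R] {q c E A B : R} (hE : IsCoprime E c)
    (hEAB : c ∣ E * A - B) (hq : q ∣ c) : q ∣ A ↔ q ∣ B := by
  have hqEAB := hq.trans hEAB
  refine ⟨fun hA => ?_, fun hB => ?_⟩
  · simpa using (dvd_mul_of_dvd_right hA E).sub hqEAB
  · refine (hE.of_isCoprime_of_dvd_right hq).symm.dvd_of_dvd_mul_left ?_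
    simpa using hqEAB.add hB

@[simp] lemma mk_rep {I : Ideal OK} (x : OK ⧸ I) : Ideal.Quotient.mk I (rep x) = x :=
  Function.surjInv_eq Ideal.Quotient.mk_surjective x

lemma mk_invMod_rep {c : OK} (v : (OK ⧸ Ideal.span {c})ˣ) :
    Ideal.Quotient.mk _ (invMod c (rep v.val)) =
      ((v⁻¹ : (OK ⧸ Ideal.span {c})ˣ) : OK ⧸ Ideal.span {c}) := by
  rw [invMod, mk_rep, mk_rep, Ring.inverse_unit]

lemma eC_mul_div_congr {c x y : OK} (A : OK)
    (h : Ideal.Quotient.mk (Ideal.span {c}) x = Ideal.Quotient.mk _ y) :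
    eC ((x * A : OK) / c) = eC ((y * A : OK) / c) := by
  obtain ⟨t, ht⟩ := Ideal.mem_span_singleton'.mp (Ideal.Quotient.eq.mp h)
  rcases eq_or_ne c 0 with rfl | hc
  · rw [show x = y by linear_combination -ht]
  · have hcC : (c : ℂ) ≠ 0 := by exact_mod_cast hc
    have hxy : ((x * A : OK) : ℂ) / c = (y * A : OK) / c + ((t * A : OK) : ℂ) := by
      rw [show x = y + t * c by linear_combination -ht]
      push_cast
      field_simp
    rw [hxy, eC_add_coe]

def addCharQuot (c A : OK) : AddChar (OK ⧸ Ideal.span {c}) ℂ where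
  toFun x := eC ((rep x * A : OK) / c)
  map_zero_eq_one' := by
    rw [eC_mul_div_congr A (y := 0) (by rw [mk_rep, map_zero])]
    simp [show eC 0 = 1 by simp [eC]]
  map_add_eq_mul' x y := by
    rw [eC_mul_div_congr A (y := rep x + rep y) (by rw [mk_rep, map_add, mk_rep, mk_rep]),
      ← eC_add, add_mul, Subring.coe_add, add_div]

lemma addCharQuot_mk (c A x : OK) :
    addCharQuot c A (Ideal.Quotient.mk _ x) = eC ((x * A : OK) / c) :=
  eC_mul_div_congr A (mk_rep _)

lemma addCharQuot_eq_zero_iff {c : OK} (hc : c ≠ 0) (A : OK) : addCharQuot c A = 0 ↔ c ∣ A := by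
  have hcC : (c : ℂ) ≠ 0 := by exact_mod_cast hc
  rw [AddChar.eq_zero_iff]
  constructor
  · intro h
    have h1 := addCharQuot_mk c A 1 ▸ h _
    have hω := addCharQuot_mk c A ωO ▸ h _
    push_cast at h1 hω
    rw [one_mul] at h1
    rw [coe_ωO, mul_div_assoc] at hω
    obtain ⟨o, ho⟩ := exists_OK_of_eC_eq_one h1 hω
    refine ⟨o, Subtype.ext ?_⟩
    push_cast
    rw [← ho]
    field_simp
  · rintro ⟨t, rfl⟩ x
    rw [← mk_rep x, addCharQuot_mk]
    convert eC_coe (rep x * t) using 2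
    push_cast
    field_simp

lemma sum_addCharQuot {c : OK} (hc : c ≠ 0) [Fintype (OK ⧸ Ideal.span {c})] (A : OK) :
    ∑ x, addCharQuot c A x = if c ∣ A then (Nm c : ℂ) else 0 := by
  rw [AddChar.sum_eq_ite, Nm, Nat.card_eq_fintype_card]
  simp only [addCharQuot_eq_zero_iff hc]

/-! ### Ramanujan sums -/

lemma span_gen (J : Ideal OK) : Ideal.span {gen J} = J := by
  have h : ∃ q : OK, Ideal.span {q} = J := by
    obtain ⟨q, hq⟩ := (IsPrincipalIdealRing.principal J).principal
    exact ⟨q, hq.symm⟩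
  rw [gen, dif_pos h]
  exact h.choose_spec

lemma gen_dvd_iff {J : Ideal OK} {a : OK} : gen J ∣ a ↔ a ∈ J := by
  rw [← Ideal.mem_span_singleton, span_gen]

lemma Nm_gen (J : Ideal OK) : Nm (gen J) = Nat.card (OK ⧸ J) := by
  rw [Nm, span_gen]

lemma mul_cofactor {c q : OK} (h : q ∣ c) : q * cofactor c q = c := by
  have h' : ∃ d, c = q * d := h
  rw [cofactor, dif_pos h']
  exact h'.choose_spec.symm

lemma gen_dvd_of_dvd_span {c : OK} {J : Ideal OK} (hJ : J ∣ Ideal.span {c}) : gen J ∣ c := by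
  rwa [← span_gen J, Ideal.span_singleton_dvd_span_singleton_iff_dvd] at hJ

/-- The divisor `(c)/J`, as the ideal generated by `c / gen J`. -/
def complDivisor (c : OK) (J : Ideal OK) : Ideal OK := Ideal.span {cofactor c (gen J)}

lemma mul_complDivisor {c : OK} {J : Ideal OK} (hJ : J ∣ Ideal.span {c}) :
    J * complDivisor c J = Ideal.span {c} := by
  rw [complDivisor, ← span_gen J, Ideal.span_singleton_mul_span_singleton, span_gen,
    mul_cofactor (gen_dvd_of_dvd_span hJ)]

lemma complDivisor_dvd {c : OK} {J : Ideal OK} (hJ : J ∣ Ideal.span {c}) :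
    complDivisor c J ∣ Ideal.span {c} :=
  Dvd.intro_left _ (mul_complDivisor hJ)

lemma complDivisor_complDivisor {c : OK} (hc : c ≠ 0) {J : Ideal OK} (hJ : J ∣ Ideal.span {c}) :
    complDivisor c (complDivisor c J) = J := by
  have hK : complDivisor c J ≠ 0 := by
    intro h
    have hspan := mul_complDivisor hJ
    rw [h, mul_zero, Ideal.zero_eq_bot, eq_comm, Ideal.span_singleton_eq_bot] at hspan
    exact hc hspan
  refine mul_left_cancel₀ hK ?_
  rw [mul_complDivisor (complDivisor_dvd hJ), mul_comm, mul_complDivisor hJ]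

lemma rep_mem {I J : Ideal OK} (hIJ : I ≤ J) {z : OK} (hz : z ∈ J) :
    rep (Ideal.Quotient.mk I z) ∈ J := by
  have h : rep (Ideal.Quotient.mk I z) - z ∈ J := hIJ (Ideal.Quotient.eq.mp (mk_rep _))
  simpa using J.add_mem h hz

lemma mk_mul_eq_mk_mul_iff {g d a b : OK} (hg : g ≠ 0) :
    Ideal.Quotient.mk (Ideal.span {g * d}) (g * a) = Ideal.Quotient.mk _ (g * b) ↔
      Ideal.Quotient.mk (Ideal.span {d}) a = Ideal.Quotient.mk _ b := by
  simp only [Ideal.Quotient.eq, Ideal.mem_span_singleton, ← mul_sub,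
    mul_dvd_mul_iff_left hg]

/-- Multiplication by `g` identifies `𝒪/(d)` with `(g)/(gd)`. -/
lemma sum_addCharQuot_mem_span {c g d : OK} (hc : c ≠ 0) (hcgd : g * d = c)
    [Fintype (OK ⧸ Ideal.span {c})] (A : OK) :
    ∑ x with rep x ∈ Ideal.span {g}, addCharQuot c A x = if d ∣ A then (Nm d : ℂ) else 0 := by
  subst hcgd
  have hg : g ≠ 0 := left_ne_zero_of_mul hc
  have hd : d ≠ 0 := right_ne_zero_of_mul hc
  have := finite_quotient_span hd
  have := Fintype.ofFinite (OK ⧸ Ideal.span {d})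
  rw [← sum_addCharQuot hd A]
  symm
  refine Finset.sum_nbij (fun y => Ideal.Quotient.mk _ (g * rep y)) (fun y _ => ?_) ?_ ?_ ?_
  · exact Finset.mem_filter.mpr ⟨Finset.mem_univ _,
      rep_mem (Ideal.span_singleton_le_span_singleton.mpr (dvd_mul_right g d))
        (Ideal.mem_span_singleton.mpr (dvd_mul_right g _))⟩
  · intro y₁ _ y₂ _ h
    simpa using (mk_mul_eq_mk_mul_iff hg).mp h
  · intro x hx
    obtain ⟨k, hk⟩ := Ideal.mem_span_singleton'.mp (Finset.mem_filter.mp hx).2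
    refine ⟨Ideal.Quotient.mk _ k, Finset.mem_coe.mpr (Finset.mem_univ _), ?_⟩
    simp only
    rw [(mk_mul_eq_mk_mul_iff hg).mpr (mk_rep _), mul_comm g k, hk, mk_rep]
  · intro y _
    rw [addCharQuot_mk, ← mk_rep y, addCharQuot_mk, mk_rep]
    congr 1
    have hgC : (g : ℂ) ≠ 0 := by exact_mod_cast hg
    push_cast
    field_simp

lemma sum_units_eq_sum_filter_isUnit {M β : Type*} [Monoid M] [Fintype M] [Fintype Mˣ]
    [AddCommMonoid β] [DecidablePred (IsUnit : M → Prop)] (f : M → β) :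
    ∑ v : Mˣ, f v = ∑ x with IsUnit x, f x := by
  refine Finset.sum_nbij (fun v => v.val) (fun v _ => ?_) (fun v _ w _ h => Units.ext h)
    (fun x hx => ?_) (fun _ _ => rfl)
  · exact Finset.mem_filter.mpr ⟨Finset.mem_univ _, v.isUnit⟩
  · obtain ⟨v, rfl⟩ := (Finset.mem_filter.mp hx).2
    exact ⟨v, Finset.mem_coe.mpr (Finset.mem_univ _), rfl⟩

theorem sum_units_addCharQuot {c : OK} (hc : c ≠ 0) [Fintype (OK ⧸ Ideal.span {c})] (A : OK) :
    ∑ v : (OK ⧸ Ideal.span {c})ˣ, addCharQuot c A v =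
      ∑ J ∈ idealDivisors (Ideal.span {c}), (idealMoebius J : ℂ) *
        if cofactor c (gen J) ∣ A then (Nm (cofactor c (gen J)) : ℂ) else 0 := by
  have hc' : Ideal.span {c} ≠ ⊥ := by simpa using hc
  have hunit : ∀ x : OK ⧸ Ideal.span {c}, (if IsUnit x then addCharQuot c A x else 0) =
      ∑ J ∈ idealDivisors (Ideal.span {c}),
        if rep x ∈ J then (idealMoebius J : ℂ) * addCharQuot c A x else 0 := by
    intro x
    rw [← Finset.sum_filter, ← Finset.sum_mul, ← Int.cast_sum,
      sum_idealMoebius_idealDivisors_mem hc', Ideal.isCoprime_span_singleton_iff,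
      ← isUnit_mk_span_singleton_iff, mk_rep]
    split_ifs <;> simp
  calc ∑ v : (OK ⧸ Ideal.span {c})ˣ, addCharQuot c A v
      = ∑ x, if IsUnit x then addCharQuot c A x else 0 := by
        rw [sum_units_eq_sum_filter_isUnit, Finset.sum_filter]
    _ = ∑ J ∈ idealDivisors (Ideal.span {c}), ∑ x,
          if rep x ∈ J then (idealMoebius J : ℂ) * addCharQuot c A x else 0 := by
        simp_rw [hunit]
        exact Finset.sum_comm
    _ = _ := Finset.sum_congr rfl fun J hJ => by
        have hsum := sum_addCharQuot_mem_span hc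
          (mul_cofactor (gen_dvd_of_dvd_span ((mem_idealDivisors hc').mp hJ))) A
        rw [span_gen] at hsum
        rw [← Finset.sum_filter, ← Finset.mul_sum, hsum]

lemma moebius_cofactor_gen (c : OK) (J : Ideal OK) :
    moebius (cofactor c (gen J)) = idealMoebius (complDivisor c J) := rfl

/-- The Ramanujan sum `c_c(A) = ∑_{q ∣ c} μ(c/q) N(q) [q ∣ A]`. -/
theorem sum_units_addCharQuot_eq_sum_moebius {c : OK} (hc : c ≠ 0)
    [Fintype (OK ⧸ Ideal.span {c})] (A : OK) :
    ∑ v : (OK ⧸ Ideal.span {c})ˣ, addCharQuot c A v =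
      ∑ J ∈ idealDivisors (Ideal.span {c}),
        (moebius (cofactor c (gen J)) : ℂ) * (Nm (gen J) : ℂ) * if gen J ∣ A then 1 else 0 := by
  have hc' : Ideal.span {c} ≠ ⊥ := by simpa using hc
  have hdvd : ∀ {J}, J ∈ idealDivisors (Ideal.span {c}) → J ∣ Ideal.span {c} :=
    (mem_idealDivisors hc').mp
  have hmem : ∀ J ∈ idealDivisors (Ideal.span {c}),
      complDivisor c J ∈ idealDivisors (Ideal.span {c}) := fun J hJ =>
    (mem_idealDivisors hc').mpr (complDivisor_dvd (hdvd hJ))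
  have hinv : ∀ J ∈ idealDivisors (Ideal.span {c}), complDivisor c (complDivisor c J) = J :=
    fun J hJ => complDivisor_complDivisor hc (hdvd hJ)
  rw [sum_units_addCharQuot hc A]
  refine Finset.sum_nbij' (complDivisor c) (complDivisor c) hmem hmem hinv hinv fun J hJ => ?_
  rw [moebius_cofactor_gen, hinv J hJ, Nm_gen, gen_dvd_iff, complDivisor,
    Ideal.mem_span_singleton]
  split_ifs <;> simp [Nm]

lemma dvd_mul_invMod_sub_one {c x : OK} (h : IsCoprime x c) : c ∣ x * invMod c x - 1 := by
  rw [← Ideal.mem_span_singleton, ← Ideal.Quotient.eq, map_mul, invMod, mk_rep, map_one,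
    Ring.mul_inverse_cancel _ (isUnit_mk_span_singleton_iff.mpr h)]

lemma finsum_units_eC_invMod_mul {c E A B : OK} (hc : c ≠ 0) (hE : IsCoprime E c)
    (hEAB : c ∣ E * A - B) :
    ∑ᶠ v : (OK ⧸ Ideal.span {c})ˣ, eC ((invMod c (rep v.val) * A : OK) / c) =
      ∑ J ∈ idealDivisors (Ideal.span {c}),
        (moebius (cofactor c (gen J)) : ℂ) * (Nm (gen J) : ℂ) * if gen J ∣ B then 1 else 0 := by
  have := finite_quotient_span hc
  have := Fintype.ofFinite (OK ⧸ Ideal.span {c})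
  have hc' : Ideal.span {c} ≠ ⊥ := by simpa using hc
  rw [finsum_eq_sum_of_fintype]
  calc ∑ v : (OK ⧸ Ideal.span {c})ˣ, eC ((invMod c (rep v.val) * A : OK) / c)
      = ∑ v : (OK ⧸ Ideal.span {c})ˣ, addCharQuot c A (v⁻¹ : (OK ⧸ Ideal.span {c})ˣ) :=
        Finset.sum_congr rfl fun v _ => by rw [← mk_invMod_rep, addCharQuot_mk]
    _ = ∑ v : (OK ⧸ Ideal.span {c})ˣ, addCharQuot c A v :=
        Fintype.sum_equiv (Equiv.inv _) _ _ fun _ => rfl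
    _ = _ := by
        rw [sum_units_addCharQuot_eq_sum_moebius hc A]
        refine Finset.sum_congr rfl fun J hJ => ?_
        rw [dvd_iff_dvd_of_isCoprime hE hEAB
          (gen_dvd_of_dvd_span ((mem_idealDivisors hc').mp hJ))]

lemma dvd_unit_mul_phase_sub {c m w b y : OK} (hw : IsCoprime w c)
    (hE : IsCoprime (3 ^ 3 * w ^ 2 * y) c) :
    c ∣ 3 ^ 3 * w ^ 2 * y * (b * invMod c w - m ^ 3 * invMod c (3 ^ 3 * w ^ 2 * y)) -
      (3 ^ 3 * b * w * y - m ^ 3) := by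
  obtain ⟨s, hs⟩ := dvd_mul_invMod_sub_one hw
  obtain ⟨t, ht⟩ := dvd_mul_invMod_sub_one hE
  exact ⟨3 ^ 3 * b * w * y * s - m ^ 3 * t, by
    linear_combination 3 ^ 3 * b * w * y * hs - m ^ 3 * ht⟩

theorem stmt10 (c m w b : OK) (hc0 : c ≠ 0) (hc3 : IsCoprime c 3)
    (hco : IsCoprime (m * w * b) c) :
    ((cubicChar c w : OK) : ℂ) *
      ∑ᶠ u : (OK ⧸ Ideal.span {c})ˣ,
        ((cubicChar c (rep u.val) : OK) : ℂ) * eC (((rep u.val : OK) : ℂ) / (c : ℂ)) *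
          ∑ᶠ v : (OK ⧸ Ideal.span {c})ˣ,
            eC (((invMod c (rep v.val) *
              (b * invMod c w - m ^ 3 * invMod c (3 ^ 3 * w ^ 2 * rep u.val)) : OK) : ℂ) /
              (c : ℂ)) =
    ((cubicChar c w : OK) : ℂ) *
      ∑ᶠ J ∈ {J : Ideal OK | J ∣ Ideal.span {c}},
        (moebius (cofactor c (gen J)) : ℂ) * (Nm (gen J) : ℂ) *
          ∑ᶠ u : (OK ⧸ Ideal.span {c})ˣ,
            (if gen J ∣ 3 ^ 3 * b * w * rep u.val - m ^ 3 then
              ((cubicChar c (rep u.val) : OK) : ℂ) * eC (((rep u.val : OK) : ℂ) / (c : ℂ))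
            else 0) := by
  have hw : IsCoprime w c := hco.of_mul_left_left.of_mul_left_right
  have hE : ∀ u : (OK ⧸ Ideal.span {c})ˣ, IsCoprime (3 ^ 3 * w ^ 2 * rep u.val) c := fun u =>
    (hc3.symm.pow_left.mul_left hw.pow_left).mul_left
      (isUnit_mk_span_singleton_iff.mp (by rw [mk_rep]; exact u.isUnit))
  have := finite_quotient_span hc0
  have := Fintype.ofFinite (OK ⧸ Ideal.span {c})
  congr 1
  rw [finsum_congr fun u => by
      rw [finsum_units_eC_invMod_mul hc0 (hE u) (dvd_unit_mul_phase_sub hw (hE u))],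
    finsum_mem_setOf_dvd_eq_sum (by simpa using hc0), finsum_eq_sum_of_fintype]
  simp_rw [finsum_eq_sum_of_fintype, Finset.mul_sum]
  rw [Finset.sum_comm]
  refine Finset.sum_congr rfl fun J _ => Finset.sum_congr rfl fun u _ => ?_
  split_ifs <;> ring

end CubicSeries
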